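/- Let a_0, a_1, a_2, ... be i.i.d. standard complex Gaussian random variables, i.e. with distribution on ℂ having density z ↦ π^{-1} e^{-|z|²} with respect to Lebesgue measure on ℂ. Then for every integer n ≥ 1, the largest root modulus x_n^(n) of the random polynomial P_n(z) = ∑_{k=0}^n a_k z^k satisfies 𝔼[(x_n^(n))²] = ∞. -/

import Mathlib

/-!
By Vieta, `a_{n-1} / a_n` is minus the sum of the `n` roots of `P_n`, so
`|a_{n-1}| / |a_n| ≤ n · x_n^(n)`. By independence,
`𝔼[(x_n^(n))²] ≥ n⁻² · 𝔼|a_{n-1}|² · 𝔼|a_n|⁻²`, and `𝔼|a_n|⁻² = ∞` because the Gaussian density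
is bounded below near `0` while `|z|⁻²` is not integrable near `0` in the plane.
-/

open MeasureTheory ProbabilityTheory Polynomial Filter

/-- The random Kac polynomial `P_n(z) = ∑_{k=0}^n a_k z^k`. -/
noncomputable def kacPoly {Ω : Type*} (a : ℕ → Ω → ℂ) (n : ℕ) (ω : Ω) : Polynomial ℂ :=
  ∑ k ∈ Finset.range (n + 1), Polynomial.C (a k ω) * Polynomial.X ^ k

/-- The smallest modulus of a root of a complex polynomial. -/
noncomputable def minRootMod (p : Polynomial ℂ) : ℝ :=
  sInf ((fun z : ℂ => ‖z‖) '' {z : ℂ | z ∈ p.roots})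

/-- The largest modulus of a root of a complex polynomial. -/
noncomputable def maxRootMod (p : Polynomial ℂ) : ℝ :=
  sSup ((fun z : ℂ => ‖z‖) '' {z : ℂ | z ∈ p.roots})

/-- The standard complex Gaussian distribution: the measure on `ℂ` with density
`z ↦ π⁻¹ e^{-|z|²}` with respect to the Lebesgue measure on `ℂ`. -/
noncomputable def stdComplexGaussian : Measure ℂ :=
  (volume : Measure ℂ).withDensity
    fun z => ENNReal.ofReal (Real.exp (-(‖z‖ ^ 2)) / Real.pi)

lemma maxRootMod_nonneg (p : ℂ[X]) : 0 ≤ maxRootMod p :=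
  Real.sSup_nonneg (by rintro _ ⟨z, -, rfl⟩; exact norm_nonneg z)

lemma norm_le_maxRootMod {p : ℂ[X]} {z : ℂ} (hz : z ∈ p.roots) : ‖z‖ ≤ maxRootMod p :=
  le_csSup (p.roots.finite_toSet.image _).bddAbove ⟨z, hz, rfl⟩

lemma norm_nextCoeff_le (p : ℂ[X]) :
    ‖p.nextCoeff‖ ≤ p.natDegree * ‖p.leadingCoeff‖ * maxRootMod p := by
  have hsplit := IsAlgClosed.splits p
  calc ‖p.nextCoeff‖ = ‖p.leadingCoeff‖ * ‖p.roots.sum‖ := by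
        rw [hsplit.nextCoeff_eq_neg_sum_roots_mul_leadingCoeff, norm_mul, norm_neg]
    _ ≤ ‖p.leadingCoeff‖ * (p.roots.map (‖·‖)).sum := by
        gcongr; exact norm_multiset_sum_le _
    _ ≤ ‖p.leadingCoeff‖ * (p.natDegree * maxRootMod p) := by
        gcongr
        rw [hsplit.natDegree_eq_card_roots, ← Multiset.card_map (‖·‖), ← nsmul_eq_mul]
        refine Multiset.sum_le_card_nsmul _ _ ?_
        simp only [Multiset.mem_map]
        rintro _ ⟨z, hz, rfl⟩
        exact norm_le_maxRootMod hz
    _ = _ := by ring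

section Kac

variable {Ω : Type*}

lemma kacPoly_coeff (a : ℕ → Ω → ℂ) (n : ℕ) (ω : Ω) (m : ℕ) :
    (kacPoly a n ω).coeff m = if m ≤ n then a m ω else 0 := by
  simp [kacPoly, coeff_C_mul, coeff_X_pow]

lemma kacPoly_natDegree {a : ℕ → Ω → ℂ} {n : ℕ} {ω : Ω} (h : a n ω ≠ 0) :
    (kacPoly a n ω).natDegree = n := by
  refine le_antisymm (natDegree_le_iff_coeff_eq_zero.mpr fun m hm ↦ ?_) ?_
  · rw [kacPoly_coeff, if_neg (by omega)]
  · exact le_natDegree_of_ne_zero (by rwa [kacPoly_coeff, if_pos le_rfl])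

lemma norm_div_le_mul_maxRootMod_kacPoly (a : ℕ → Ω → ℂ) {n : ℕ} (hn : 1 ≤ n) (ω : Ω) :
    ‖a (n - 1) ω‖ / ‖a n ω‖ ≤ n * maxRootMod (kacPoly a n ω) := by
  rcases eq_or_ne (a n ω) 0 with h | h
  · -- `P_n` may then have lower degree, but the left side is `0` by the convention `x / 0 = 0`.
    rw [h, norm_zero, div_zero]
    exact mul_nonneg n.cast_nonneg (maxRootMod_nonneg _)
  have hdeg := kacPoly_natDegree h
  have hlead : (kacPoly a n ω).leadingCoeff = a n ω := by
    rw [leadingCoeff, hdeg, kacPoly_coeff, if_pos le_rfl]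
  have hnext : (kacPoly a n ω).nextCoeff = a (n - 1) ω := by
    rw [nextCoeff_of_natDegree_pos (by omega), hdeg, kacPoly_coeff, if_pos (Nat.sub_le n 1)]
  have := norm_nextCoeff_le (kacPoly a n ω)
  rw [hdeg, hlead, hnext] at this
  rw [div_le_iff₀ (norm_pos_iff.mpr h)]
  linarith

end Kac

theorem lintegral_ball_norm_rpow_neg_finrank_eq_top {E : Type*} [NormedAddCommGroup E]
    [NormedSpace ℝ E] [FiniteDimensional ℝ E] [Nontrivial E] [MeasurableSpace E] [BorelSpace E]
    (μ : Measure E) [μ.IsAddHaarMeasure] {r : ℝ} (hr : 0 < r) :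
    ∫⁻ x in Metric.ball 0 r, ENNReal.ofReal (‖x‖ ^ (-(Module.finrank ℝ E : ℝ))) ∂μ = ⊤ := by
  have hd : 1 ≤ Module.finrank ℝ E := Module.finrank_pos
  have hnot :
      ¬ IntegrableOn (fun x : E ↦ ‖x‖ ^ (-(Module.finrank ℝ E : ℝ))) (Metric.ball 0 r) μ := by
    -- in polar coordinates the integrand becomes `y ^ (-1)` on `(0, r)`
    rw [integrableOn_fun_norm_addHaar μ (f := fun y : ℝ ↦ y ^ (-(Module.finrank ℝ E : ℝ))),
      integrableOn_congr_fun (g := fun y : ℝ ↦ y ^ (-1 : ℝ)) _ measurableSet_Ioo,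
      intervalIntegral.integrableOn_Ioo_rpow_iff hr]
    · norm_num
    · intro y hy
      simp only [smul_eq_mul]
      rw [← Real.rpow_natCast, ← Real.rpow_add hy.1, Nat.cast_sub hd]
      ring_nf
  by_contra hfin
  have hmeas : Measurable fun x : E ↦ ‖x‖ ^ (-(Module.finrank ℝ E : ℝ)) := by fun_prop
  refine hnot ⟨hmeas.aestronglyMeasurable, ?_⟩
  rw [hasFiniteIntegral_iff_ofReal (ae_of_all _ fun x ↦ by positivity)]
  exact lt_top_iff_ne_top.mpr hfin

lemma lintegral_ball_inv_norm_sq_eq_top {r : ℝ} (hr : 0 < r) :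
    ∫⁻ z in Metric.ball (0 : ℂ) r, ENNReal.ofReal (‖z‖ ^ 2)⁻¹ ∂volume = ⊤ := by
  simpa [Complex.finrank_real_complex, Real.rpow_neg (norm_nonneg _)] using
    lintegral_ball_norm_rpow_neg_finrank_eq_top (volume : Measure ℂ) hr

lemma smul_restrict_ball_le_stdComplexGaussian :
    ENNReal.ofReal (Real.exp (-1) / Real.pi) • volume.restrict (Metric.ball (0 : ℂ) 1) ≤
      stdComplexGaussian := by
  rw [← withDensity_const, ← withDensity_indicator measurableSet_ball, stdComplexGaussian]
  refine withDensity_mono (ae_of_all _ fun z ↦ ?_)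
  by_cases hz : z ∈ Metric.ball (0 : ℂ) 1
  · rw [Set.indicator_of_mem hz]
    rw [mem_ball_zero_iff] at hz
    refine ENNReal.ofReal_le_ofReal ?_
    gcongr
    nlinarith [norm_nonneg z]
  · simp [hz]

lemma lintegral_inv_norm_sq_stdComplexGaussian :
    ∫⁻ z, ENNReal.ofReal (‖z‖ ^ 2)⁻¹ ∂stdComplexGaussian = ⊤ := by
  refine top_le_iff.mp
    (le_trans ?_ (lintegral_mono' smul_restrict_ball_le_stdComplexGaussian le_rfl))
  rw [lintegral_smul_measure, smul_eq_mul, lintegral_ball_inv_norm_sq_eq_top one_pos,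
    ENNReal.mul_top (by positivity)]

lemma lintegral_norm_sq_ne_zero {E : Type*} [NormedAddCommGroup E] [MeasurableSpace E]
    [OpensMeasurableSpace E] (ν : Measure E) [NeZero ν] (h0 : ν {0} = 0) :
    ∫⁻ x, ENNReal.ofReal (‖x‖ ^ 2) ∂ν ≠ 0 := by
  rw [Ne, lintegral_eq_zero_iff (by fun_prop)]
  intro h
  have hne : ∀ᵐ x ∂ν, x ≠ 0 := compl_mem_ae_iff.mpr h0
  have : ∀ᵐ x ∂ν, False := by
    filter_upwards [h, hne] with x hx hx0
    exact hx0 (by simpa using hx)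
  exact NeZero.ne ν (ae_eq_bot.mp (eventually_false_iff_eq_bot.mp this))

lemma stdComplexGaussian_singleton (z : ℂ) : stdComplexGaussian {z} = 0 :=
  withDensity_absolutelyContinuous _ _ (measure_singleton z)

lemma lintegral_norm_div_sq_eq_top {Ω : Type*} [MeasurableSpace Ω] {μ : Measure Ω}
    [IsProbabilityMeasure μ] {X Y : Ω → ℂ} (hX : Measurable X) (hY : Measurable Y)
    (hXY : IndepFun X Y μ) (hXlaw : μ.map X = stdComplexGaussian)
    (hYlaw : μ.map Y = stdComplexGaussian) :
    ∫⁻ ω, ENNReal.ofReal ((‖X ω‖ / ‖Y ω‖) ^ 2) ∂μ = ⊤ := by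
  have : IsProbabilityMeasure stdComplexGaussian :=
    hXlaw ▸ Measure.isProbabilityMeasure_map hX.aemeasurable
  have hsplit : ∀ ω, ENNReal.ofReal ((‖X ω‖ / ‖Y ω‖) ^ 2) =
      ENNReal.ofReal (‖X ω‖ ^ 2) * ENNReal.ofReal (‖Y ω‖ ^ 2)⁻¹ := fun ω ↦ by
    rw [div_pow, div_eq_mul_inv, ENNReal.ofReal_mul (sq_nonneg _)]
  simp_rw [hsplit]
  have hf : Measurable fun z : ℂ ↦ ENNReal.ofReal (‖z‖ ^ 2) := by fun_prop
  have hg : Measurable fun z : ℂ ↦ ENNReal.ofReal (‖z‖ ^ 2)⁻¹ := by fun_prop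
  rw [lintegral_mul_eq_lintegral_mul_lintegral_of_indepFun''
      (f := fun ω ↦ ENNReal.ofReal (‖X ω‖ ^ 2)) (g := fun ω ↦ ENNReal.ofReal (‖Y ω‖ ^ 2)⁻¹)
      (hf.comp hX).aemeasurable (hg.comp hY).aemeasurable (hXY.comp hf hg),
    ← lintegral_map hf hX, ← lintegral_map hg hY, hXlaw, hYlaw,
    lintegral_inv_norm_sq_stdComplexGaussian,
    ENNReal.mul_top (lintegral_norm_sq_ne_zero _ (stdComplexGaussian_singleton 0))]

/-- For i.i.d. standard complex Gaussian coefficients, the largest root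
modulus of the Kac polynomial `P_n` has infinite second moment for every `n ≥ 1`. -/
theorem maxRootMod_infinite_second_moment_complex_gaussian
    {Ω : Type*} [MeasurableSpace Ω] (μ : Measure Ω) [IsProbabilityMeasure μ]
    (a : ℕ → Ω → ℂ) (hmeas : ∀ k, Measurable (a k))
    (hindep : iIndepFun a μ)
    (hgauss : ∀ k, μ.map (a k) = stdComplexGaussian) :
    ∀ n : ℕ, 1 ≤ n →
      ∫⁻ ω, ENNReal.ofReal (maxRootMod (kacPoly a n ω) ^ 2) ∂μ = ⊤ := by
  intro n hn
  have hratio : ∫⁻ ω, ENNReal.ofReal ((‖a (n - 1) ω‖ / ‖a n ω‖) ^ 2) ∂μ = ⊤ :=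
    lintegral_norm_div_sq_eq_top (hmeas _) (hmeas _) (hindep.indepFun (by omega))
      (hgauss _) (hgauss _)
  have hbound : ∀ ω, ENNReal.ofReal ((‖a (n - 1) ω‖ / ‖a n ω‖) ^ 2) ≤
      ENNReal.ofReal ((n : ℝ) ^ 2) * ENNReal.ofReal (maxRootMod (kacPoly a n ω) ^ 2) := fun ω ↦ by
    rw [← ENNReal.ofReal_mul (by positivity), ← mul_pow]
    exact ENNReal.ofReal_le_ofReal <|
      pow_le_pow_left₀ (by positivity) (norm_div_le_mul_maxRootMod_kacPoly a hn ω) 2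
  have htop := hratio.symm.trans_le (lintegral_mono hbound)
  rw [lintegral_const_mul' _ _ ENNReal.ofReal_ne_top, top_le_iff, ENNReal.mul_eq_top] at htop
  exact htop.elim (·.2) (absurd ·.1 ENNReal.ofReal_ne_top)
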